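/- Let Z be a finite connected simple graph with no cut-vertex, i.e., for every vertex v of Z, the subgraph of Z induced on V(Z) \ {v} is connected. Then for every vertex ℓ of Z and every pair of even-cardinality subsets S, T of the set E_ℓ of edges of Z incident to ℓ, there exists an automorphism σ of the graph X_0(Z) with σ(ℓ, S) = (ℓ, T). -/

import Mathlib

/-!
If `F` is a set of edges of `Z` meeting every vertex in an even number of edges, then
`(v, A) ↦ (v, A ∆ F_v)`, with `F_v` the edges of `F` at `v`, is an automorphism of `X₀(Z)`: the
edge `vw` is toggled at both of its endpoints, so the parity condition defining adjacency is
unchanged. It therefore suffices to find such an `F` with `F_ℓ = S ∆ T`. Pair up the edges of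
`S ∆ T`; a pair `ℓa, ℓb` closes into a cycle through a path from `a` to `b` in `Z - ℓ`, and `F` is
the symmetric difference of these cycles.
-/

/-- The graph `X₀(Z)`: vertices are pairs `(ℓ, S)` with `S` an even-cardinality set of
edges of `Z` incident to `ℓ`; `(ℓ, S)` and `(k, T)` are adjacent iff `ℓ` is adjacent to
`k` in `Z` and the edge `{ℓ, k}` lies in exactly one of `S` and `T`. -/
def X0 {V : Type*} [DecidableEq V] (Z : SimpleGraph V) :
    SimpleGraph {p : V × Finset (Sym2 V) // ↑p.2 ⊆ Z.incidenceSet p.1 ∧ Even p.2.card} where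
  Adj p q := Z.Adj p.1.1 q.1.1 ∧ Xor' (s(p.1.1, q.1.1) ∈ p.1.2) (s(p.1.1, q.1.1) ∈ q.1.2)
  symm := by
    constructor
    rintro ⟨⟨l, S⟩, _⟩ ⟨⟨k, T⟩, _⟩ ⟨hadj, hx⟩
    refine ⟨hadj.symm, ?_⟩
    rw [Sym2.eq_swap]
    simp only [Xor', Xor] at hx ⊢
    tauto
  loopless := by
    constructor
    rintro ⟨⟨l, S⟩, _⟩ ⟨hadj, _⟩
    exact Z.loopless.irrefl l hadj

open Finset
open scoped symmDiff

theorem Finset.even_card_symmDiff {α : Type*} [DecidableEq α] {s t : Finset α}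
    (hs : Even #s) (ht : Even #t) : Even #(s ∆ t) := by
  have hcard : #(s ∆ t) + 2 * #(s ∩ t) = #s + #t := by
    rw [← card_union_add_card_inter, symmDiff_eq_sup_sdiff_inf, sup_eq_union, inf_eq_inter,
      card_sdiff_of_subset inter_subset_union]
    have := card_le_card (inter_subset_union (s := s) (t := t))
    omega
  rw [Nat.even_iff] at *
  omega

theorem Finset.filter_symmDiff {α : Type*} [DecidableEq α] (p : α → Prop) [DecidablePred p]
    (s t : Finset α) : {x ∈ s ∆ t | p x} = {x ∈ s | p x} ∆ {x ∈ t | p x} := by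
  ext x
  simp only [mem_filter, mem_symmDiff]
  tauto

theorem Finset.mem_symmDiff_filter_iff_xor {α : Type*} [DecidableEq α] {p : α → Prop}
    [DecidablePred p] {s t : Finset α} {x : α} (hx : p x) :
    x ∈ s ∆ {y ∈ t | p y} ↔ Xor (x ∈ s) (x ∈ t) := by
  simp only [mem_symmDiff, mem_filter, hx, and_true, Xor]

namespace SimpleGraph

variable {V : Type*} [DecidableEq V] {G : SimpleGraph V}

def IsEvenEdgeSet (G : SimpleGraph V) (F : Finset (Sym2 V)) : Prop :=
  ↑F ⊆ G.edgeSet ∧ ∀ v, Even #{e ∈ F | v ∈ e}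

theorem isEvenEdgeSet_empty : G.IsEvenEdgeSet ∅ := by
  simp [IsEvenEdgeSet]

theorem IsEvenEdgeSet.symmDiff {F C : Finset (Sym2 V)} (hF : G.IsEvenEdgeSet F)
    (hC : G.IsEvenEdgeSet C) : G.IsEvenEdgeSet (F ∆ C) := by
  refine ⟨fun e he ↦ ?_, fun v ↦ ?_⟩
  · rcases mem_symmDiff.mp he with ⟨he, -⟩ | ⟨he, -⟩
    exacts [hF.1 he, hC.1 he]
  · rw [filter_symmDiff]
    exact even_card_symmDiff (hF.2 v) (hC.2 v)

theorem Walk.IsTrail.isEvenEdgeSet_edges {u : V} {c : G.Walk u u} (hc : c.IsTrail) :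
    G.IsEvenEdgeSet c.edges.toFinset := by
  refine ⟨fun e he ↦ c.edges_subset_edgeSet (List.mem_toFinset.mp he), fun v ↦ ?_⟩
  have hcount := hc.even_countP_edges_iff v
  rw [List.countP_eq_length_filter] at hcount
  have hfilter : {e ∈ c.edges.toFinset | v ∈ e} = (c.edges.filter (v ∈ ·)).toFinset := by
    ext; simp
  rw [hfilter, List.toFinset_card_of_nodup (hc.edges_nodup.filter _)]
  simpa using hcount

theorem exists_isPath_not_mem_support {ℓ a b : V}
    (hℓ : (G.induce {w | w ≠ ℓ}).Connected) (ha : a ≠ ℓ) (hb : b ≠ ℓ) :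
    ∃ p : G.Walk a b, p.IsPath ∧ ℓ ∉ p.support := by
  obtain ⟨q⟩ := hℓ.preconnected ⟨a, ha⟩ ⟨b, hb⟩
  let f := Embedding.induce (G := G) {w | w ≠ ℓ}
  refine ⟨q.toPath.1.map f.toHom, q.toPath.2.map f.injective, ?_⟩
  change ℓ ∉ (Walk.map _ _).support
  rw [Walk.support_map, List.mem_map]
  rintro ⟨⟨x, hx⟩, -, hxℓ⟩
  exact hx hxℓ

theorem exists_isEvenEdgeSet_filter_eq_pair {ℓ a b : V}
    (hℓ : (G.induce {w | w ≠ ℓ}).Connected) (ha : G.Adj ℓ a) (hb : G.Adj ℓ b) (hab : a ≠ b) :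
    ∃ C, G.IsEvenEdgeSet C ∧ {e ∈ C | ℓ ∈ e} = {s(ℓ, a), s(ℓ, b)} := by
  obtain ⟨p, hp, hℓp⟩ := exists_isPath_not_mem_support hℓ ha.ne' hb.ne'
  have hℓedges : ∀ e ∈ p.edges, ℓ ∉ e := fun e he hℓe ↦ hℓp (p.mem_support_of_mem_edges he hℓe)
  let c := Walk.cons ha (p.concat hb.symm)
  have hc : c.IsCycle := by
    refine (Walk.cons_isCycle_iff _ _).mpr ⟨hp.concat hℓp _, ?_⟩
    rw [Walk.edges_concat, List.concat_eq_append, List.mem_append, List.mem_singleton, not_or,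
      Sym2.eq_swap (a := b), Sym2.congr_right]
    exact ⟨fun h ↦ hℓedges _ h (Sym2.mem_mk_left _ _), hab⟩
  refine ⟨c.edges.toFinset, hc.isTrail.isEvenEdgeSet_edges, ?_⟩
  ext e
  simp only [c, Walk.edges_cons, Walk.edges_concat, List.toFinset_cons, mem_filter, mem_insert,
    List.mem_toFinset, List.concat_eq_append, List.mem_append, List.mem_singleton, mem_singleton]
  constructor
  · rintro ⟨rfl | he | rfl, hℓe⟩
    exacts [.inl rfl, absurd hℓe (hℓedges _ he), .inr Sym2.eq_swap]
  · rintro (rfl | rfl)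
    exacts [⟨.inl rfl, Sym2.mem_mk_left _ _⟩, ⟨.inr (.inr Sym2.eq_swap), Sym2.mem_mk_left _ _⟩]

theorem exists_isEvenEdgeSet_filter_eq {ℓ : V} (hℓ : (G.induce {w | w ≠ ℓ}).Connected)
    {D : Finset (Sym2 V)} (hD : ↑D ⊆ G.incidenceSet ℓ) (hDe : Even #D) :
    ∃ F, G.IsEvenEdgeSet F ∧ {e ∈ F | ℓ ∈ e} = D := by
  induction D using Finset.strongInduction with | H D ih =>
  obtain rfl | ⟨e, he⟩ := D.eq_empty_or_nonempty
  · exact ⟨∅, isEvenEdgeSet_empty, filter_empty _⟩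
  obtain ⟨e', he'⟩ : (D.erase e).Nonempty := by
    rw [← card_pos, card_erase_of_mem he]
    have := card_pos.mpr ⟨e, he⟩
    obtain ⟨k, hk⟩ := hDe
    omega
  have hne : e' ≠ e := ne_of_mem_erase he'
  have he'D : e' ∈ D := mem_of_mem_erase he'
  obtain ⟨a, rfl⟩ := Sym2.mem_iff_exists.mp (hD he).2
  obtain ⟨b, rfl⟩ := Sym2.mem_iff_exists.mp (hD he'D).2
  have hpair : {s(ℓ, a), s(ℓ, b)} ⊆ D := insert_subset he (singleton_subset_iff.mpr he'D)
  obtain ⟨C, hC, hCℓ⟩ := exists_isEvenEdgeSet_filter_eq_pair hℓ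
    ((G.mem_incidenceSet _ _).mp (hD he)) ((G.mem_incidenceSet _ _).mp (hD he'D))
    (by rintro rfl; exact hne rfl)
  obtain ⟨F, hF, hFℓ⟩ := ih (D \ {s(ℓ, a), s(ℓ, b)}) (sdiff_ssubset hpair (insert_nonempty _ _))
    ((coe_subset.mpr sdiff_subset).trans hD)
    (by rw [card_sdiff_of_subset hpair, card_pair hne.symm]; exact hDe.tsub even_two)
  refine ⟨F ∆ C, hF.symmDiff hC, ?_⟩
  rw [filter_symmDiff, hFℓ, hCℓ, disjoint_sdiff_self_left.symmDiff_eq_sup, sup_eq_union,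
    sdiff_union_of_subset hpair]

end SimpleGraph

namespace X0

variable {V : Type*} [DecidableEq V] {Z : SimpleGraph V} {F : Finset (Sym2 V)}

def twist (hF : Z.IsEvenEdgeSet F) : X0 Z ≃g X0 Z where
  toEquiv := Function.Involutive.toPerm
    (fun p ↦ ⟨(p.1.1, p.1.2 ∆ {e ∈ F | p.1.1 ∈ e}),
      fun e he ↦ (mem_symmDiff.mp he).elim (fun h ↦ p.2.1 h.1)
        (fun h ↦ ⟨hF.1 (mem_filter.mp h.1).1, (mem_filter.mp h.1).2⟩),
      even_card_symmDiff p.2.2 (hF.2 p.1.1)⟩)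
    (fun p ↦ Subtype.ext (Prod.ext rfl (symmDiff_symmDiff_cancel_right _ _)))
  map_rel_iff' {p q} := by
    change _ ∧ Xor _ _ ↔ _ ∧ Xor _ _
    refine and_congr_right fun _ ↦ ?_
    dsimp only [Function.Involutive.toPerm, Equiv.coe_fn_mk]
    rw [mem_symmDiff_filter_iff_xor (p := (p.1.1 ∈ ·)) (Sym2.mem_mk_left _ _),
      mem_symmDiff_filter_iff_xor (p := (q.1.1 ∈ ·)) (Sym2.mem_mk_right _ _)]
    simp only [Xor]
    tauto

theorem twist_apply (hF : Z.IsEvenEdgeSet F) (p : V × Finset (Sym2 V)) (hp) :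
    twist hF ⟨p, hp⟩ = ⟨(p.1, p.2 ∆ {e ∈ F | p.1 ∈ e}), (twist hF ⟨p, hp⟩).2⟩ :=
  rfl

end X0

theorem X0_automorphism_fixing_first_coordinate_general {V : Type*} [DecidableEq V]
    (Z : SimpleGraph V)
    (hnocut : ∀ v : V, ((Z.induce {w : V | w ≠ v})).Connected)
    (ℓ : V) (S T : Finset (Sym2 V))
    (hS : ↑S ⊆ Z.incidenceSet ℓ) (hSe : Even S.card)
    (hT : ↑T ⊆ Z.incidenceSet ℓ) (hTe : Even T.card) :
    ∃ φ : X0 Z ≃g X0 Z, φ ⟨(ℓ, S), hS, hSe⟩ = ⟨(ℓ, T), hT, hTe⟩ := by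
  have hST : ↑(S ∆ T) ⊆ Z.incidenceSet ℓ := fun e he ↦
    (mem_symmDiff.mp he).elim (fun h ↦ hS h.1) (fun h ↦ hT h.1)
  obtain ⟨F, hF, hFℓ⟩ :=
    SimpleGraph.exists_isEvenEdgeSet_filter_eq (hnocut ℓ) hST (even_card_symmDiff hSe hTe)
  refine ⟨X0.twist hF, ?_⟩
  rw [X0.twist_apply]
  simp only [hFℓ, symmDiff_symmDiff_cancel_left]

/-- If `Z` is a finite connected graph with no cut-vertex (removing any
vertex leaves it connected), then for any vertex `ℓ` and any even subsets `S`, `T` of the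
edges incident to `ℓ`, some automorphism of `X₀(Z)` maps `(ℓ, S)` to `(ℓ, T)`. -/
theorem X0_automorphism_fixing_first_coordinate {V : Type*} [Fintype V] [DecidableEq V]
    (Z : SimpleGraph V) (hconn : Z.Connected)
    (hnocut : ∀ v : V, ((Z.induce {w : V | w ≠ v})).Connected)
    (ℓ : V) (S T : Finset (Sym2 V))
    (hS : ↑S ⊆ Z.incidenceSet ℓ) (hSe : Even S.card)
    (hT : ↑T ⊆ Z.incidenceSet ℓ) (hTe : Even T.card) :
    ∃ φ : X0 Z ≃g X0 Z, φ ⟨(ℓ, S), hS, hSe⟩ = ⟨(ℓ, T), hT, hTe⟩ :=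
  X0_automorphism_fixing_first_coordinate_general Z hnocut ℓ S T hS hSe hT hTe
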